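/- Let n ≥ 2 and let (C, C̄) be an equitable 2-partition of H(n,q) with quotient matrix S satisfying S₁₁ − S₂₁ = (q−1)n − 2q. Suppose there exist α, β ∈ 𝒜 such that the set of essential coordinates of (χ_C)_n^α differs from the set of essential coordinates of (χ_C)_n^β. Then for every vertex x ∈ 𝒜^n, 2·|{γ ∈ 𝒜 : the vertex obtained from x by replacing its n-th coordinate by γ lies in C}| = S₂₁, and 2·|{γ ∈ 𝒜 : the vertex obtained from x by replacing its n-th coordinate by γ lies in C̄}| = S₁₂; that is, every maximal clique of H(n,q) consisting of pairwise n-adjacent vertices contains exactly S₂₁/2 vertices of C and S₁₂/2 vertices of C̄. -/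

import Mathlib

/-- `(C, Cᶜ)` is an equitable 2-partition of the graph `G` (both cells nonempty) with
quotient matrix `S`: every vertex of `C` has exactly `S 0 0` neighbors in `C` and `S 0 1`
neighbors in `Cᶜ`, and every vertex of `Cᶜ` has exactly `S 1 0` neighbors in `C` and
`S 1 1` neighbors in `Cᶜ`. -/
def IsEquitable2 {V : Type*} (G : SimpleGraph V) (C : Set V)
    (S : Matrix (Fin 2) (Fin 2) ℤ) : Prop :=
  C.Nonempty ∧ Cᶜ.Nonempty ∧
    (∀ x ∈ C, ((G.neighborSet x ∩ C).ncard : ℤ) = S 0 0 ∧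
      ((G.neighborSet x ∩ Cᶜ).ncard : ℤ) = S 0 1) ∧
    (∀ x ∈ Cᶜ, ((G.neighborSet x ∩ C).ncard : ℤ) = S 1 0 ∧
      ((G.neighborSet x ∩ Cᶜ).ncard : ℤ) = S 1 1)

/-- The Hamming graph `H(n,q)` on the vertex set `𝒜ⁿ` (where `|𝒜| = q`): two vertices are
adjacent iff they differ in exactly one coordinate. -/
def hammingGraph (n : ℕ) (𝒜 : Type*) [DecidableEq 𝒜] : SimpleGraph (Fin n → 𝒜) where
  Adj x y := hammingDist x y = 1
  symm := ⟨fun x y h => by show hammingDist y x = 1; rw [hammingDist_comm]; exact h⟩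
  loopless := ⟨fun x h => by simp [hammingDist_self] at h⟩

/-- A coordinate `i` is essential for `f` if there exist two inputs differing only in
coordinate `i` at which `f` takes different values. -/
def EssentialCoord {m : ℕ} {𝒜 : Type*} (f : (Fin m → 𝒜) → ℝ) (i : Fin m) : Prop :=
  ∃ x y : Fin m → 𝒜, (∀ j, j ≠ i → x j = y j) ∧ f x ≠ f y

/-!
Write `f = χ_C` and `Δ` for the Laplacian of the Hamming graph `H(n,q)`. Equitability together
with `S₁₁ - S₂₁ = (q-1)n - 2q` says `Δ f = 2q f - S₂₁`. On the slices `f_γ(y) = f(y, γ)` this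
reads `Δ f_γ = q f_γ + F - S₂₁` in `H(n-1,q)`, where `F = ∑_γ f_γ` counts the vertices of `C` on
a line in direction `n`. Hence every `f_γ - f_δ` is a `q`-eigenfunction, and such eigenfunctions
have degree at most one: a constant plus a sum of functions of one coordinate each. If a
coordinate is essential for `f_α` but not for `f_β`, the fact that `f_α` is `0/1`-valued forces
`f_β` itself to have degree at most one; then so do all slices and `F`. On functions of degree
at most one `Δ` acts as multiplication by `q` up to an additive constant, whereas
`Δ F = 2q F - q S₂₁`, so `F` is constant and `2F = S₂₁`.
-/

open Finset Function Matrix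

instance (N : ℕ) (𝒜 : Type*) [DecidableEq 𝒜] : DecidableRel (hammingGraph N 𝒜).Adj :=
  fun x y => inferInstanceAs (Decidable (hammingDist x y = 1))

lemma update_eq_update_iff {ι α : Type*} [DecidableEq ι] {x : ι → α} {i j : ι} {b c : α}
    (hb : b ≠ x i) :
    update x i b = update x j c ↔ i = j ∧ b = c := by
  refine ⟨fun h => ?_, by rintro ⟨rfl, rfl⟩; rfl⟩
  have hij : i = j := by
    by_contra hij
    simpa [update_of_ne hij, hb] using congrFun h i
  subst hij
  exact ⟨rfl, by simpa using congrFun h i⟩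

lemma eq_of_forall_update_eq {ι β α : Type*} [Fintype ι] [DecidableEq ι] {h : (ι → β) → α}
    (H : ∀ x i b, h (update x i b) = h x) (x z : ι → β) : h x = h z := by
  suffices ∀ s : Finset ι, h (s.piecewise z x) = h x by simpa using (this univ).symm
  intro s
  induction s using Finset.induction_on with
  | empty => simp
  | insert i s _ ih => rw [piecewise_insert, H, ih]

section HammingGraph

variable {𝒜 : Type*} [DecidableEq 𝒜] {N : ℕ}

lemma hammingGraph_adj_update {x : Fin N → 𝒜} {i : Fin N} {b : 𝒜} (hb : b ≠ x i) :
    (hammingGraph N 𝒜).Adj x (update x i b) := by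
  change hammingDist _ _ = 1
  rw [hammingDist, card_eq_one]
  refine ⟨i, ?_⟩
  ext j
  by_cases hj : j = i
  · subst hj; simp [hb.symm]
  · simp [hj]

lemma hammingGraph_adj_iff {x z : Fin N → 𝒜} :
    (hammingGraph N 𝒜).Adj x z ↔ ∃ i, ∃ b ≠ x i, update x i b = z := by
  refine ⟨fun h => ?_, ?_⟩
  · obtain ⟨i, hi⟩ := card_eq_one.1 h
    have hne : ∀ j, x j ≠ z j ↔ j = i := fun j => by
      simpa using congrArg (j ∈ ·) hi
    refine ⟨i, z i, fun h => (hne i).2 rfl h.symm, ?_⟩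
    rw [update_eq_iff]
    exact ⟨rfl, fun j hj => not_not.1 fun h => hj ((hne j).1 h)⟩
  · rintro ⟨i, b, hb, rfl⟩
    exact hammingGraph_adj_update hb

variable [Fintype 𝒜]

lemma sum_neighborFinset_hammingGraph {M : Type*} [AddCommMonoid M]
    (h : (Fin N → 𝒜) → M) (x : Fin N → 𝒜) :
    ∑ z ∈ (hammingGraph N 𝒜).neighborFinset x, h z =
      ∑ i, ∑ b ∈ univ.erase (x i), h (update x i b) := by
  rw [sum_sigma']
  symm
  refine sum_bij (fun p _ => update x p.1 p.2) ?_ ?_ ?_ fun _ _ => rfl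
  · rintro ⟨i, b⟩ hp
    simp only [mem_sigma, mem_erase] at hp
    simpa using hammingGraph_adj_update hp.2.1
  · rintro ⟨i, b⟩ hp ⟨j, c⟩ -
    simp only [mem_sigma, mem_erase] at hp
    rw [update_eq_update_iff hp.2.1]
    rintro ⟨rfl, rfl⟩
    rfl
  · intro z hz
    obtain ⟨i, b, hb, rfl⟩ :=
      hammingGraph_adj_iff.1 ((SimpleGraph.mem_neighborFinset _ _ _).1 hz)
    exact ⟨⟨i, b⟩, by simpa using hb, rfl⟩

lemma hammingGraph_degree (x : Fin N → 𝒜) :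
    (hammingGraph N 𝒜).degree x = N * (Fintype.card 𝒜 - 1) := by
  rw [← SimpleGraph.card_neighborFinset_eq_degree, card_eq_sum_ones,
    sum_neighborFinset_hammingGraph]
  simp [card_erase_of_mem]

end HammingGraph

section Laplacian

variable {𝒜 : Type*} [Fintype 𝒜] {N : ℕ}

noncomputable def hammingLaplacian (h : (Fin N → 𝒜) → ℝ) (x : Fin N → 𝒜) : ℝ :=
  ∑ i, ∑ b, (h x - h (update x i b))

lemma hammingLaplacian_sub (f g : (Fin N → 𝒜) → ℝ) (x : Fin N → 𝒜) :
    hammingLaplacian (fun y => f y - g y) x = hammingLaplacian f x - hammingLaplacian g x := by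
  simp only [hammingLaplacian, ← sum_sub_distrib]
  congr! 2
  ring

lemma hammingLaplacian_sum {ι : Type*} (s : Finset ι) (f : ι → (Fin N → 𝒜) → ℝ)
    (x : Fin N → 𝒜) :
    hammingLaplacian (fun y => ∑ a ∈ s, f a y) x = ∑ a ∈ s, hammingLaplacian (f a) x := by
  simp only [hammingLaplacian, ← sum_sub_distrib]
  conv_rhs => rw [sum_comm]
  exact sum_congr rfl fun i _ => sum_comm

lemma hammingLaplacian_snoc (h : (Fin (N + 1) → 𝒜) → ℝ) (y : Fin N → 𝒜) (a : 𝒜) :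
    hammingLaplacian h (Fin.snoc y a) =
      hammingLaplacian (fun z => h (Fin.snoc z a)) y +
        ∑ b, (h (Fin.snoc y a) - h (Fin.snoc y b)) := by
  simp only [hammingLaplacian, Fin.sum_univ_castSucc, ← Fin.snoc_update, Fin.update_snoc_last]

variable [DecidableEq 𝒜]

lemma hammingLaplacian_eq_lapMatrix_mulVec (h : (Fin N → 𝒜) → ℝ) :
    hammingLaplacian h = (hammingGraph N 𝒜).lapMatrix ℝ *ᵥ h := by
  ext x
  rw [SimpleGraph.lapMatrix_mulVec_apply, ← SimpleGraph.card_neighborFinset_eq_degree,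
    ← nsmul_eq_mul, ← sum_const, ← sum_sub_distrib, sum_neighborFinset_hammingGraph
      (fun z => h x - h z)]
  exact sum_congr rfl fun i _ => (sum_erase _ (by simp)).symm

lemma eq_of_hammingLaplacian_eq_zero {h : (Fin N → 𝒜) → ℝ} (H : hammingLaplacian h = 0)
    (x z : Fin N → 𝒜) : h x = h z := by
  rw [hammingLaplacian_eq_lapMatrix_mulVec,
    SimpleGraph.lapMatrix_mulVec_eq_zero_iff_forall_adj] at H
  refine eq_of_forall_update_eq (fun y i b => ?_) x z
  by_cases hb : b = y i
  · rw [hb, update_eq_self]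
  · exact (H _ _ (hammingGraph_adj_update hb)).symm

end Laplacian

section DegreeLeOne

variable {𝒜 : Type*} {N : ℕ}

def degreeLeOne (N : ℕ) (𝒜 : Type*) : Submodule ℝ ((Fin N → 𝒜) → ℝ) where
  carrier := {h | ∃ (K : ℝ) (σ : Fin N → 𝒜 → ℝ), ∀ x, h x = K + ∑ i, σ i (x i)}
  add_mem' := by
    rintro f g ⟨K, σ, hf⟩ ⟨L, τ, hg⟩
    exact ⟨K + L, σ + τ, fun x => by simp only [hf, hg, Pi.add_apply, sum_add_distrib]; ring⟩
  zero_mem' := ⟨0, 0, by simp⟩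
  smul_mem' := by
    rintro c f ⟨K, σ, hf⟩
    exact ⟨c * K, c • σ, fun x => by simp [hf, mul_sum, mul_add]⟩

lemma snoc_mem_degreeLeOne {T : (Fin N → 𝒜) → ℝ} (hT : T ∈ degreeLeOne N 𝒜) (g : 𝒜 → ℝ) :
    (fun x : Fin (N + 1) → 𝒜 => g (x (Fin.last N)) + T (Fin.init x)) ∈
      degreeLeOne (N + 1) 𝒜 := by
  obtain ⟨K, σ, hσ⟩ := hT
  refine ⟨K, Fin.snoc σ g, fun x => ?_⟩
  simp only [hσ, Fin.sum_univ_castSucc, Fin.snoc_castSucc, Fin.snoc_last, Fin.init]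
  ring

lemma sum_apply_update (σ : Fin N → 𝒜 → ℝ) (x : Fin N → 𝒜) (i : Fin N) (b : 𝒜) :
    ∑ j, σ j (update x i b j) = ∑ j, σ j (x j) + (σ i b - σ i (x i)) := by
  rw [← sub_eq_iff_eq_add', ← sum_sub_distrib, sum_eq_single i]
  · rw [update_self]
  · intro j _ hj
    rw [update_of_ne hj, sub_self]
  · simp

lemma update_sub_update_of_mem_degreeLeOne {h : (Fin N → 𝒜) → ℝ} (hh : h ∈ degreeLeOne N 𝒜)
    (x y : Fin N → 𝒜) (i : Fin N) (b c : 𝒜) :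
    h (update x i b) - h (update x i c) = h (update y i b) - h (update y i c) := by
  obtain ⟨K, σ, hσ⟩ := hh
  simp only [hσ, sum_apply_update]
  ring

lemma comp_update_mem_degreeLeOne {h : (Fin N → 𝒜) → ℝ} (hh : h ∈ degreeLeOne N 𝒜)
    (i : Fin N) (b : 𝒜) : (fun x => h (update x i b)) ∈ degreeLeOne N 𝒜 := by
  obtain ⟨K, σ, hσ⟩ := hh
  refine ⟨K + σ i b, update σ i (fun _ => 0), fun x => ?_⟩
  have hτ : ∀ j,
      update σ i (fun _ => 0) j (x j) = σ j (x j) - if j = i then σ i (x i) else 0 :=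
    fun j => by by_cases hj : j = i <;> simp [hj]
  show h (update x i b) = _
  rw [hσ, sum_apply_update, sum_congr rfl fun j _ => hτ j, sum_sub_distrib, sum_ite_eq']
  simp only [mem_univ, if_true]
  ring

lemma mem_degreeLeOne_of_essentialCoord {g g' : (Fin N → 𝒜) → ℝ}
    (hg : ∀ x, g x = 0 ∨ g x = 1) (hd : (fun x => g x - g' x) ∈ degreeLeOne N 𝒜) {i : Fin N}
    (hgi : EssentialCoord g i) (hg'i : ¬ EssentialCoord g' i) : g' ∈ degreeLeOne N 𝒜 := by
  -- Since `g'` ignores coordinate `i`, the jumps of `g` across coordinate `i` are those of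
  -- `g - g'`, which do not depend on the other coordinates. A nonzero such jump of the
  -- `0/1`-valued `g` forces `g` to vanish on a whole hyperplane `x i = b₀`, on which `g'`
  -- agrees with `g' - g`.
  have hg'_update : ∀ x b, g' (update x i b) = g' x := fun x b => by
    by_contra hne
    exact hg'i ⟨update x i b, x, fun j hj => update_of_ne hj _ _, hne⟩
  have hjump : ∀ x y b c,
      g (update x i b) - g (update x i c) = g (update y i b) - g (update y i c) :=
    fun x y b c => by
      have := update_sub_update_of_mem_degreeLeOne hd x y i b c
      simp only [hg'_update] at this
      linarith
  obtain ⟨b₀, hb₀⟩ : ∃ b₀, ∀ x, g (update x i b₀) = 0 := by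
    obtain ⟨u, v, huv, hne⟩ := hgi
    wlog hv : g v = 0 generalizing u v
    · exact this v u (fun j hj => (huv j hj).symm) (Ne.symm hne)
        ((hg u).resolve_right fun hu => hne (hu.trans ((hg v).resolve_left hv).symm))
    have hu : g u = 1 := (hg u).resolve_left fun hu => hne (hu.trans hv.symm)
    have hvu : update v i (u i) = u := update_eq_iff.2 ⟨rfl, fun j hj => (huv j hj).symm⟩
    refine ⟨v i, fun x => ?_⟩
    have := hjump x v (u i) (v i)
    rw [hvu, update_eq_self, hu, hv] at this
    rcases hg (update x i (u i)) with h | h <;> rcases hg (update x i (v i)) with h' | h' <;>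
      linarith
  have : g' = -fun x => g (update x i b₀) - g' (update x i b₀) := by
    funext x
    simp [hb₀, hg'_update]
  rw [this]
  exact neg_mem (comp_update_mem_degreeLeOne hd i b₀)

variable [Fintype 𝒜]

lemma exists_hammingLaplacian_eq_of_mem_degreeLeOne {h : (Fin N → 𝒜) → ℝ}
    (hh : h ∈ degreeLeOne N 𝒜) :
    ∃ c, ∀ x, hammingLaplacian h x = Fintype.card 𝒜 * h x + c := by
  obtain ⟨K, σ, hσ⟩ := hh
  refine ⟨-(Fintype.card 𝒜 * K) - ∑ i, ∑ b, σ i b, fun x => ?_⟩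
  have hterm : ∀ i b, h x - h (update x i b) = σ i (x i) - σ i b := fun i b => by
    rw [hσ, hσ, sum_apply_update]
    ring
  simp only [hammingLaplacian, hterm, sum_sub_distrib, sum_const, card_univ, nsmul_eq_mul]
  rw [hσ, mul_add, mul_sum]
  ring

lemma hammingLaplacian_eq_zero_of_mem_degreeLeOne {h : (Fin N → 𝒜) → ℝ}
    (hh : h ∈ degreeLeOne N 𝒜) {μ c : ℝ} (hμ : μ ≠ Fintype.card 𝒜)
    (H : ∀ x, hammingLaplacian h x = μ * h x + c) : hammingLaplacian h = 0 := by
  obtain ⟨c', hc'⟩ := exists_hammingLaplacian_eq_of_mem_degreeLeOne hh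
  have hconst : ∀ x y, h x = h y := fun x y => by
    have hμ' : (Fintype.card 𝒜 - μ : ℝ) ≠ 0 := sub_ne_zero.2 hμ.symm
    have hx := (H x).symm.trans (hc' x)
    have hy := (H y).symm.trans (hc' y)
    exact mul_left_cancel₀ hμ' (by linarith)
  ext x
  exact sum_eq_zero fun i _ => sum_eq_zero fun b _ => by rw [hconst (update x i b) x, sub_self]

theorem mem_degreeLeOne_of_hammingLaplacian_eq [DecidableEq 𝒜] [Nonempty 𝒜]
    {h : (Fin N → 𝒜) → ℝ} (H : ∀ x, hammingLaplacian h x = Fintype.card 𝒜 * h x) :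
    h ∈ degreeLeOne N 𝒜 := by
  induction N with
  | zero =>
    exact ⟨h (Classical.arbitrary _), 0,
      fun x => by simp [Subsingleton.elim x (Classical.arbitrary _)]⟩
  | succ N ih =>
    -- Every slice `h_a = h (snoc · a)` has `Δ h_a = T := ∑_b h_b`: so the differences of slices
    -- are harmonic, hence constant, while `Δ T = q T` lets the induction hypothesis apply to `T`.
    set Q : ℝ := (Fintype.card 𝒜 : ℝ)
    set T : (Fin N → 𝒜) → ℝ := fun y => ∑ b, h (Fin.snoc y b)
    have hsum : ∀ y a,
        ∑ b, (h (Fin.snoc y a) - h (Fin.snoc y b)) = Q * h (Fin.snoc y a) - T y :=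
      fun y a => by simp [T, sum_sub_distrib, Q]
    have hsec : ∀ a y, hammingLaplacian (fun z => h (Fin.snoc z a)) y = T y := fun a y => by
      have := H (Fin.snoc y a)
      rw [hammingLaplacian_snoc, hsum] at this
      linarith
    have hT : T ∈ degreeLeOne N 𝒜 := ih fun y => by
      simp [T, hammingLaplacian_sum, hsec, Q]
    have hdiff : ∀ a b y z,
        h (Fin.snoc y a) - h (Fin.snoc y b) = h (Fin.snoc z a) - h (Fin.snoc z b) :=
      fun a b => eq_of_hammingLaplacian_eq_zero <| funext fun y => by
        simp [hammingLaplacian_sub, hsec]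
    have hQ : Q ≠ 0 := by positivity
    set y₀ : Fin N → 𝒜 := Classical.arbitrary _
    set g : 𝒜 → ℝ := fun a => ∑ b, (h (Fin.snoc y₀ a) - h (Fin.snoc y₀ b))
    have : h = Q⁻¹ • fun x => g (x (Fin.last N)) + T (Fin.init x) := by
      funext x
      obtain ⟨y, a, rfl⟩ : ∃ y a, x = Fin.snoc y a :=
        ⟨Fin.init x, x (Fin.last N), (Fin.snoc_init_self x).symm⟩
      simp only [Pi.smul_apply, smul_eq_mul, Fin.snoc_last, Fin.init_snoc, g]
      rw [eq_inv_mul_iff_mul_eq₀ hQ, sum_congr rfl fun b _ => hdiff a b y₀ y, hsum]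
      ring
    rw [this]
    exact Submodule.smul_mem _ _ (snoc_mem_degreeLeOne hT g)

end DegreeLeOne

namespace IsEquitable2

variable {V : Type*} [Fintype V] {G : SimpleGraph V} [DecidableRel G.Adj]
  {C : Set V} {S : Matrix (Fin 2) (Fin 2) ℤ}

lemma degree_eq (hS : IsEquitable2 G C S) {x : V} (hx : x ∈ C) :
    (G.degree x : ℤ) = S 0 0 + S 0 1 := by
  rw [← (hS.2.2.1 x hx).1, ← (hS.2.2.1 x hx).2, ← Set.sdiff_eq, ← Nat.cast_add,
    Set.ncard_inter_add_ncard_sdiff_eq_ncard _ _ (Set.toFinite _), ← Nat.card_coe_set_eq,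
    Nat.card_eq_fintype_card, SimpleGraph.card_neighborSet_eq_degree]

lemma adjMatrix_mulVec_indicator (hS : IsEquitable2 G C S) (x : V) :
    (G.adjMatrix ℝ *ᵥ C.indicator 1) x = (S 0 0 - S 1 0) * C.indicator 1 x + S 1 0 := by
  have hcount : (G.adjMatrix ℝ *ᵥ C.indicator 1) x = (G.neighborSet x ∩ C).ncard := by
    classical
    rw [SimpleGraph.adjMatrix_mulVec_apply, sum_indicator_eq_sum_filter]
    simp only [Pi.one_apply, sum_const, nsmul_eq_mul, mul_one]
    rw [← Set.ncard_coe_finset, coe_filter]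
    simp only [SimpleGraph.mem_neighborFinset]
    rfl
  by_cases hx : x ∈ C
  · rw [hcount, Set.indicator_of_mem hx, ← (hS.2.2.1 x hx).1]
    simp
  · rw [hcount, Set.indicator_of_notMem hx, ← (hS.2.2.2 x hx).1]
    simp

lemma lapMatrix_mulVec_indicator [DecidableEq V] (hS : IsEquitable2 G C S) (x : V) :
    (G.lapMatrix ℝ *ᵥ C.indicator 1) x =
      (G.degree x - (S 0 0 - S 1 0)) * C.indicator 1 x - S 1 0 := by
  rw [SimpleGraph.lapMatrix_mulVec_apply, ← SimpleGraph.adjMatrix_mulVec_apply,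
    hS.adjMatrix_mulVec_indicator]
  ring

end IsEquitable2

theorem two_mul_sum_snoc_eq {𝒜 : Type*} [Fintype 𝒜] [DecidableEq 𝒜] {n : ℕ}
    {f : (Fin (n + 1) → 𝒜) → ℝ} {c : ℝ} (hf01 : ∀ x, f x = 0 ∨ f x = 1)
    (hf : ∀ x, hammingLaplacian f x = 2 * Fintype.card 𝒜 * f x - c)
    (hdiff : ∃ α β : 𝒜, {i | EssentialCoord (fun y => f (Fin.snoc y α)) i} ≠
      {i | EssentialCoord (fun y => f (Fin.snoc y β)) i})
    (y : Fin n → 𝒜) : 2 * ∑ γ, f (Fin.snoc y γ) = c := by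
  obtain ⟨α, β, hαβ⟩ := hdiff
  have : Nonempty 𝒜 := ⟨α⟩
  set Q : ℝ := (Fintype.card 𝒜 : ℝ)
  have hQ : 0 < Q := by positivity
  set F : (Fin n → 𝒜) → ℝ := fun y => ∑ γ, f (Fin.snoc y γ)
  have hslice : ∀ γ y,
      hammingLaplacian (fun z => f (Fin.snoc z γ)) y = Q * f (Fin.snoc y γ) + F y - c :=
    fun γ y => by
      have := hf (Fin.snoc y γ)
      simp only [hammingLaplacian_snoc, sum_sub_distrib, sum_const, card_univ,
        nsmul_eq_mul] at this
      linarith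
  have hslice_sub : ∀ γ δ,
      (fun y => f (Fin.snoc y γ) - f (Fin.snoc y δ)) ∈ degreeLeOne n 𝒜 :=
    fun γ δ => mem_degreeLeOne_of_hammingLaplacian_eq fun y => by
      rw [hammingLaplacian_sub, hslice, hslice]
      ring
  obtain ⟨δ, hδ⟩ : ∃ δ, (fun y => f (Fin.snoc y δ)) ∈ degreeLeOne n 𝒜 := by
    obtain ⟨i, hi⟩ : ∃ i, ¬ (EssentialCoord (fun y => f (Fin.snoc y α)) i ↔
        EssentialCoord (fun y => f (Fin.snoc y β)) i) := by
      by_contra! h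
      exact hαβ (Set.ext h)
    by_cases hα : EssentialCoord (fun y => f (Fin.snoc y α)) i
    · exact ⟨β, mem_degreeLeOne_of_essentialCoord (fun _ => hf01 _) (hslice_sub α β) hα
        fun hβ => hi (iff_of_true hα hβ)⟩
    · exact ⟨α, mem_degreeLeOne_of_essentialCoord (fun _ => hf01 _) (hslice_sub β α)
        (not_not.1 fun hβ => hi (iff_of_false hα hβ)) hα⟩
  have hF : F ∈ degreeLeOne n 𝒜 := by
    have : F = ∑ γ, ((fun y => f (Fin.snoc y δ)) +
        fun y => f (Fin.snoc y γ) - f (Fin.snoc y δ)) := by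
      funext y
      simp [F]
    rw [this]
    exact sum_mem fun γ _ => add_mem hδ (hslice_sub γ δ)
  have hΔF : ∀ y, hammingLaplacian F y = 2 * Q * F y + -(Q * c) := fun y => by
    simp only [F, hammingLaplacian_sum, hslice, sum_add_distrib, sum_sub_distrib, sum_const,
      card_univ, nsmul_eq_mul, ← mul_sum]
    ring
  have hΔF0 := congrFun (hammingLaplacian_eq_zero_of_mem_degreeLeOne hF (by linarith) hΔF) y
  rw [hΔF, Pi.zero_apply] at hΔF0
  exact mul_left_cancel₀ hQ.ne' (by linear_combination hΔF0)

lemma ncard_setOf_update_last_mem {𝒜 : Type*} [Fintype 𝒜] {n : ℕ}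
    (C : Set (Fin (n + 1) → 𝒜)) (x : Fin (n + 1) → 𝒜) :
    ({γ : 𝒜 | update x (Fin.last n) γ ∈ C}.ncard : ℝ) =
      ∑ γ, C.indicator 1 (Fin.snoc (Fin.init x) γ) := by
  classical
  rw [← Fin.snoc_init_self x]
  simp only [Fin.update_snoc_last, Fin.init_snoc, sum_indicator_eq_sum_filter, Pi.one_apply,
    sum_const, nsmul_eq_mul, mul_one]
  rw [← Set.ncard_coe_finset, coe_filter]
  simp

theorem stmt17_general {𝒜 : Type*} [Fintype 𝒜] [DecidableEq 𝒜] (q n : ℕ)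
    (hq : Fintype.card 𝒜 = q)
    (C : Set (Fin (n + 1) → 𝒜)) (S : Matrix (Fin 2) (Fin 2) ℤ)
    (hS : IsEquitable2 (hammingGraph (n + 1) 𝒜) C S)
    (heig : S 0 0 - S 1 0 = ((q : ℤ) - 1) * (n + 1) - 2 * q)
    (hdiff : ∃ α β : 𝒜,
      {i : Fin n | EssentialCoord
          (fun y : Fin n → 𝒜 => C.indicator (fun _ => (1 : ℝ)) (Fin.snoc y α)) i} ≠
      {i : Fin n | EssentialCoord
          (fun y : Fin n → 𝒜 => C.indicator (fun _ => (1 : ℝ)) (Fin.snoc y β)) i}) :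
    ∀ x : Fin (n + 1) → 𝒜,
      2 * (({γ : 𝒜 | Function.update x (Fin.last n) γ ∈ C}).ncard : ℤ) = S 1 0 ∧
      2 * (({γ : 𝒜 | Function.update x (Fin.last n) γ ∉ C}).ncard : ℤ) = S 0 1 := by
  subst hq
  have : Nonempty 𝒜 := hdiff.elim fun α _ => ⟨α⟩
  have hdeg (x) : ((hammingGraph (n + 1) 𝒜).degree x : ℤ) = (Fintype.card 𝒜 - 1) * (n + 1) := by
    rw [hammingGraph_degree]
    push_cast [Fintype.card_pos]
    ring
  have hf (x) : hammingLaplacian (C.indicator 1) x =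
      2 * Fintype.card 𝒜 * C.indicator 1 x - S 1 0 := by
    rw [hammingLaplacian_eq_lapMatrix_mulVec, hS.lapMatrix_mulVec_indicator]
    congr 2
    exact_mod_cast (by linarith [hdeg x] :
      ((hammingGraph (n + 1) 𝒜).degree x : ℤ) - (S 0 0 - S 1 0) = 2 * Fintype.card 𝒜)
  intro x
  set s := {γ : 𝒜 | update x (Fin.last n) γ ∈ C}
  have hs : 2 * (s.ncard : ℤ) = S 1 0 := by
    have := two_mul_sum_snoc_eq (fun z => Set.indicator_eq_zero_or_self _ _ z) hf hdiff
      (Fin.init x)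
    rw [← ncard_setOf_update_last_mem] at this
    exact_mod_cast this
  have hsc : (s.ncard : ℤ) + sᶜ.ncard = Fintype.card 𝒜 := by
    rw [← Nat.card_eq_fintype_card, ← Set.ncard_add_ncard_compl s, Nat.cast_add]
  obtain ⟨x₀, hx₀⟩ := hS.1
  have hdeg₀ := (hS.degree_eq hx₀).symm.trans (hdeg x₀)
  refine ⟨hs, ?_⟩
  rw [← Set.compl_ofPred]
  linarith

/-- ambient graph `H(n+1, q)`, `n + 1 ≥ 2`: if the sets of essential
coordinates of the restrictions `(χ_C)_{n+1}^α : y ↦ χ_C (snoc y α)` are not all equal,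
then every maximal clique of `H(n+1,q)` consisting of pairwise `(n+1)`-adjacent vertices
(vertices varying in the last coordinate) contains exactly `S₂₁/2` vertices of `C` and
`S₁₂/2` vertices of `Cᶜ`. -/
theorem stmt17 {𝒜 : Type*} [Fintype 𝒜] [DecidableEq 𝒜] (q n : ℕ)
    (hq : Fintype.card 𝒜 = q) (hq2 : 2 ≤ q) (hn : 1 ≤ n)
    (C : Set (Fin (n + 1) → 𝒜)) (S : Matrix (Fin 2) (Fin 2) ℤ)
    (hS : IsEquitable2 (hammingGraph (n + 1) 𝒜) C S)
    (heig : S 0 0 - S 1 0 = ((q : ℤ) - 1) * (n + 1) - 2 * q)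
    (hdiff : ∃ α β : 𝒜,
      {i : Fin n | EssentialCoord
          (fun y : Fin n → 𝒜 => C.indicator (fun _ => (1 : ℝ)) (Fin.snoc y α)) i} ≠
      {i : Fin n | EssentialCoord
          (fun y : Fin n → 𝒜 => C.indicator (fun _ => (1 : ℝ)) (Fin.snoc y β)) i}) :
    ∀ x : Fin (n + 1) → 𝒜,
      2 * (({γ : 𝒜 | Function.update x (Fin.last n) γ ∈ C}).ncard : ℤ) = S 1 0 ∧
      2 * (({γ : 𝒜 | Function.update x (Fin.last n) γ ∉ C}).ncard : ℤ) = S 0 1 :=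
  stmt17_general q n hq C S hS heig hdiff
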